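/- (Theorem 2.) Let n be a positive natural number, σ > 0, r ∈ ℝⁿ, let C be a finite nonempty set of binary vectors in {0,1}ⁿ, and fix a bit position i. Then the bit-wise MAP (maximum a posteriori) decision under a uniform prior decides ĉ_i = 1 rather than ĉ_i = 0 — i.e., Σ_{c ∈ C, c_i = 0} p(r|c) < Σ_{c ∈ C, c_i = 1} p(r|c) — if and only if (Σ_{c ∈ C, c_i = 1} exp((2/σ²) Σ_j r_j c_j)) / (Σ_{c ∈ C} exp((2/σ²) Σ_j r_j c_j)) > 1/2. Hence a network that computes the scaled softmax (scaling factor α = 2/σ²) of the correlations r·c over the codebook, sums the softmax outputs over codewords whose i-th bit is 1, and thresholds the result at 1/2, realizes bit-wise MAP decoding for the BI-AWGN channel. -/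
import Mathlib


/-- BI-AWGN likelihood of receiving `r` given binary codeword `c` (BPSK mapping
`s_j = 2 c_j - 1`), with noise standard deviation `σ`. -/
noncomputable def biawgnLik (n : ℕ) (σ : ℝ) (r c : Fin n → ℝ) : ℝ :=
  ∏ j : Fin n, (1 / Real.sqrt (2 * Real.pi * σ ^ 2)) *
    Real.exp (-(r j - (2 * c j - 1)) ^ 2 / (2 * σ ^ 2))

lemma biawgn_factor (n : ℕ) (σ : ℝ) (hσ : 0 < σ) (r c : Fin n → ℝ)
    (hb : ∀ j, c j = 0 ∨ c j = 1) :
    biawgnLik n σ r c =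
      (∏ j : Fin n, (1 / Real.sqrt (2 * Real.pi * σ ^ 2)) *
        Real.exp (-((r j) ^ 2 + 1) / (2 * σ ^ 2) - r j / σ ^ 2)) *
      Real.exp ((2 / σ ^ 2) * ∑ j, r j * c j) := by
  unfold biawgnLik
  rw [Finset.mul_sum, Real.exp_sum, ← Finset.prod_mul_distrib]
  refine Finset.prod_congr rfl fun j _ => ?_
  conv_rhs => rw [mul_assoc, ← Real.exp_add]
  congr 1
  have hσ2 : σ ^ 2 ≠ 0 := by positivity
  rcases hb j with h | h <;> rw [h] <;> field_simp <;> ring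

open Classical in
/-- Theorem 2 of the paper: the bit-wise MAP decision under a uniform
prior decides `ĉ_i = 1`, i.e. `Σ_{c : c_i = 0} p(r|c) < Σ_{c : c_i = 1} p(r|c)`, if and
only if the sum over codewords with `c_i = 1` of the scaled softmax (scaling factor
`α = 2/σ²`) of the correlations `r·c` over the codebook exceeds the threshold `1/2`.
Hence the softmax-sum-threshold network realizes bit-wise MAP decoding for BI-AWGN. -/
theorem mlnn_realizes_bitwise_map
    (n : ℕ) (hn : 0 < n) (σ : ℝ) (hσ : 0 < σ) (r : Fin n → ℝ)
    (C : Finset (Fin n → ℝ)) (hC : C.Nonempty)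
    (hbin : ∀ c ∈ C, ∀ j, c j = 0 ∨ c j = 1) (i : Fin n) :
    ((∑ c ∈ C.filter (fun c => c i = 0), biawgnLik n σ r c) <
        (∑ c ∈ C.filter (fun c => c i = 1), biawgnLik n σ r c)) ↔
      (∑ c ∈ C.filter (fun c => c i = 1),
          Real.exp ((2 / σ ^ 2) * ∑ j, r j * c j)) /
        (∑ c ∈ C, Real.exp ((2 / σ ^ 2) * ∑ j, r j * c j)) > 1 / 2 := by
  set K : ℝ := ∏ j : Fin n, (1 / Real.sqrt (2 * Real.pi * σ ^ 2)) *
      Real.exp (-((r j) ^ 2 + 1) / (2 * σ ^ 2) - r j / σ ^ 2) with hK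
  have hKpos : 0 < K := by
    apply Finset.prod_pos
    intro j _
    have : 0 < Real.sqrt (2 * Real.pi * σ ^ 2) := by
      apply Real.sqrt_pos.2; positivity
    positivity
  set E : (Fin n → ℝ) → ℝ := fun c => Real.exp ((2 / σ ^ 2) * ∑ j, r j * c j) with hE
  have hlik : ∀ c ∈ C, biawgnLik n σ r c = K * E c := fun c hc =>
    biawgn_factor n σ hσ r c (hbin c hc)
  set S0 : ℝ := ∑ c ∈ C.filter (fun c => c i = 0), E c with hS0
  set S1 : ℝ := ∑ c ∈ C.filter (fun c => c i = 1), E c with hS1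
  have h0 : (∑ c ∈ C.filter (fun c => c i = 0), biawgnLik n σ r c) = K * S0 := by
    rw [hS0, Finset.mul_sum]
    exact Finset.sum_congr rfl fun c hc => hlik c (Finset.mem_filter.1 hc).1
  have h1 : (∑ c ∈ C.filter (fun c => c i = 1), biawgnLik n σ r c) = K * S1 := by
    rw [hS1, Finset.mul_sum]
    exact Finset.sum_congr rfl fun c hc => hlik c (Finset.mem_filter.1 hc).1
  have hsplit : (∑ c ∈ C, E c) = S1 + S0 := by
    rw [hS0, hS1]
    have : C.filter (fun c => c i = 0) = C.filter (fun c => ¬ c i = 1) := by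
      apply Finset.filter_congr
      intro c hc
      rcases hbin c hc i with h | h <;> simp [h]
    rw [this]
    exact (Finset.sum_filter_add_sum_filter_not C _ E).symm
  have hS0nn : 0 ≤ S0 := Finset.sum_nonneg fun c _ => (Real.exp_pos _).le
  have hS1nn : 0 ≤ S1 := Finset.sum_nonneg fun c _ => (Real.exp_pos _).le
  have hden : 0 < S1 + S0 := by
    rw [← hsplit]
    exact Finset.sum_pos (fun c _ => Real.exp_pos _) hC
  rw [h0, h1, hsplit]
  constructor
  · intro h
    have hlt : S0 < S1 := lt_of_mul_lt_mul_left h hKpos.le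
    rw [gt_iff_lt, div_lt_div_iff₀ (by norm_num) hden] at *
    linarith
  · intro h
    rw [gt_iff_lt, div_lt_div_iff₀ (by norm_num) hden] at h
    have : S0 < S1 := by linarith
    exact mul_lt_mul_of_pos_left this hKpos
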